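/- arXiv:math/0402458 — 3 statements merged into one kernel-verified Lean document; each statement's English description precedes it below -/
import Mathlib

section
/- For every (2,1,2)-number m in the open interval (2^{2k}, 2^{2k} + 2^k) we have B(m^2) = 1 + B(m - 2^{2k}) + B((m - 2^{2k})^2) > B(m), i.e., writing m = 2^{2k} + r with 1 ≤ r < 2^k, one has B(m) = 1 + B(r) and B(m^2) = 1 + B(r) + B(r^2). -/
def B (n : ℕ) : ℕ := (Nat.digits 2 n).sum

lemma B_rec (n : ℕ) (hn : 0 < n) : B n = n % 2 + B (n / 2) := by
  unfold B
  rw [Nat.digits_def' (by norm_num) hn, List.sum_cons]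

lemma B_pos (n : ℕ) (hn : 0 < n) : 0 < B n := by
  induction n using Nat.strong_induction_on with
  | _ n ih =>
    rw [B_rec n hn]
    by_cases h : n % 2 = 0
    · have h2 : 0 < n / 2 := by omega
      have := ih (n / 2) (Nat.div_lt_self hn (by norm_num)) h2
      omega
    · omega

lemma B_split : ∀ e a b : ℕ, b < 2 ^ e → B (2 ^ e * a + b) = B a + B b := by
  intro e
  induction e with
  | zero =>
    intro a b hb
    interval_cases b
    simp [B]
  | succ e ih =>
    intro a b hb
    rcases Nat.eq_zero_or_pos (2 ^ (e + 1) * a + b) with h0 | hpos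
    · obtain ⟨h1, h2⟩ := Nat.add_eq_zero.mp h0
      have ha : a = 0 := by
        rcases Nat.mul_eq_zero.mp h1 with h | h
        · exact absurd h (by positivity)
        · exact h
      simp [ha, h2, B]
    · rw [B_rec _ hpos]
      have hpow : 2 ^ (e + 1) * a = 2 * (2 ^ e * a) := by rw [pow_succ]; ring
      have hmod : (2 ^ (e + 1) * a + b) % 2 = b % 2 := by omega
      have hdiv : (2 ^ (e + 1) * a + b) / 2 = 2 ^ e * a + b / 2 := by omega
      rw [hmod, hdiv, ih a (b / 2) (by omega)]
      rcases Nat.eq_zero_or_pos b with hb0 | hbpos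
      · simp [hb0, B]
      · rw [B_rec b hbpos]; ring

lemma B_pow_add (e b : ℕ) (hb : b < 2 ^ e) : B (2 ^ e + b) = 1 + B b := by
  have := B_split e 1 b hb
  rw [mul_one] at this
  rw [this]
  norm_num [B]

theorem stmt_4 (k r : ℕ) (hk : 0 < k) (hr1 : 1 ≤ r) (hr2 : r < 2 ^ k) :
    B (2 ^ (2 * k) + r) = 1 + B r ∧
    B ((2 ^ (2 * k) + r) ^ 2) = 1 + B r + B (r ^ 2) ∧
    B (2 ^ (2 * k) + r) < B ((2 ^ (2 * k) + r) ^ 2) := by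
  have hrk : r < 2 ^ (2 * k) := lt_of_lt_of_le hr2 (pow_le_pow_right₀ (by norm_num) (by omega))
  have h1 : B (2 ^ (2 * k) + r) = 1 + B r := B_pow_add _ _ hrk
  have hr2sq : r ^ 2 < 2 ^ (2 * k) := by
    calc r ^ 2 < 2 ^ k * 2 ^ k := by
          rw [pow_two]; exact Nat.mul_lt_mul_of_lt_of_le hr2 (le_of_lt hr2) (by positivity)
      _ = 2 ^ (2 * k) := by rw [← pow_add]; ring_nf
  have h2r : 2 * r < 2 ^ (2 * k) := by
    have : 2 * r < 2 * 2 ^ k := by omega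
    calc 2 * r < 2 * 2 ^ k := this
      _ = 2 ^ (k + 1) := by rw [pow_succ]; ring
      _ ≤ 2 ^ (2 * k) := pow_le_pow_right₀ (by norm_num) (by omega)
  have hsq : (2 ^ (2 * k) + r) ^ 2 = 2 ^ (2 * k) * (2 ^ (2 * k) + 2 * r) + r ^ 2 := by ring
  have hB2r : B (2 * r) = B r := by
    rw [B_rec (2 * r) (by omega)]
    simp [Nat.mul_div_cancel_left r (by norm_num : 0 < 2)]
  have h2 : B ((2 ^ (2 * k) + r) ^ 2) = 1 + B r + B (r ^ 2) := by
    rw [hsq, B_split _ _ _ hr2sq, B_pow_add _ _ h2r, hB2r]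
  refine ⟨h1, h2, ?_⟩
  rw [h1, h2]
  have := B_pos (r ^ 2) (by positivity)
  omega
end

section
/- For every odd integer m = 2k+1 with m > 5, the number 2^{2k+1} + 2^{k+2} - 1 is a (2,1,2)-number lying between 2^m and 2^m + 4·2^{m/2}. -/
lemma Bstep (n : ℕ) : B n = n % 2 + B (n / 2) := by
  rcases Nat.eq_zero_or_pos n with h | h
  · simp [B, h]
  · unfold B
    rw [Nat.digits_def' (by norm_num : (1:ℕ) < 2) h]
    simp [Nat.add_comm]

lemma Bsplit (e a b : ℕ) (hb : b < 2 ^ e) : B (2 ^ e * a + b) = B a + B b := by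
  induction e generalizing b with
  | zero => interval_cases b <;> simp [B]
  | succ e ih =>
    have h2 : 2 ^ (e + 1) * a + b = 2 * (2 ^ e * a) + b := by ring
    rw [Bstep (2 ^ (e + 1) * a + b), Bstep b, h2, Nat.mul_add_mod,
      Nat.mul_add_div (by norm_num)]
    have hb2 : b / 2 < 2 ^ e := by
      have : 2 ^ (e + 1) = 2 * 2 ^ e := by ring
      omega
    rw [ih _ hb2]
    omega

lemma Bpow2m1 (e : ℕ) : B (2 ^ e - 1) = e := by
  induction e with
  | zero => simp [B]
  | succ e ih =>
    have h1 : (1:ℕ) ≤ 2 ^ e := Nat.one_le_two_pow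
    have h2 : 2 ^ (e + 1) = 2 * 2 ^ e := by ring
    have hm : (2 ^ (e + 1) - 1) % 2 = 1 := by omega
    have hd : (2 ^ (e + 1) - 1) / 2 = 2 ^ e - 1 := by omega
    rw [Bstep, hm, hd, ih]
    omega

lemma Bone : B 1 = 1 := by simp [B]

lemma Bpow2 (e : ℕ) : B (2 ^ e) = 1 := by
  have := Bsplit e 1 0 (by positivity)
  simpa [B] using this

theorem stmt_5 (k : ℕ) (h : 5 < 2 * k + 1) :
    B (2 ^ (2 * k + 1) + 2 ^ (k + 2) - 1) = B ((2 ^ (2 * k + 1) + 2 ^ (k + 2) - 1) ^ 2) ∧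
    2 ^ (2 * k + 1) < 2 ^ (2 * k + 1) + 2 ^ (k + 2) - 1 ∧
    ((2 ^ (2 * k + 1) + 2 ^ (k + 2) - 1 : ℕ) : ℝ) <
      2 ^ (2 * k + 1 : ℕ) + 4 * 2 ^ ((2 * k + 1 : ℝ) / 2) := by
  have hk3 : 3 ≤ k := by omega
  have h1 : (1:ℕ) ≤ 2 ^ (k + 2) := Nat.one_le_two_pow
  have h1' : (1:ℕ) ≤ 2 ^ (k - 1) := Nat.one_le_two_pow
  -- n = 2^{k+2} * 2^{k-1} + (2^{k+2} - 1)
  have hn : 2 ^ (2 * k + 1) + 2 ^ (k + 2) - 1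
      = 2 ^ (k + 2) * 2 ^ (k - 1) + (2 ^ (k + 2) - 1) := by
    have hpow : 2 ^ (k + 2) * 2 ^ (k - 1) = 2 ^ (2 * k + 1) := by
      rw [← pow_add]
      congr 1
      omega
    rw [hpow]
    omega
  have hBn : B (2 ^ (2 * k + 1) + 2 ^ (k + 2) - 1) = k + 3 := by
    rw [hn, Bsplit (k + 2) (2 ^ (k - 1)) (2 ^ (k + 2) - 1) (by omega),
      Bpow2, Bpow2m1]
    omega
  -- n^2 = 2^{k+3} * M + 1
  have hsq : (2 ^ (2 * k + 1) + 2 ^ (k + 2) - 1) ^ 2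
      = 2 ^ (k + 3) * ((2 ^ (k - 1) - 1)
          + 2 ^ k * (1 + 2 ^ (k + 1) * (1 + 2 ^ (k - 2)))) + 1 := by
    obtain ⟨j, rfl⟩ : ∃ j, k = j + 3 := ⟨k - 3, by omega⟩
    have e1 : 2 * (j + 3) + 1 = 2 * j + 7 := by omega
    have e2 : j + 3 + 2 = j + 5 := by omega
    have e3 : j + 3 + 3 = j + 6 := by omega
    have e4 : j + 3 - 1 = j + 2 := by omega
    have e5 : j + 3 + 1 = j + 4 := by omega
    have e6 : j + 3 - 2 = j + 1 := by omega
    rw [e1, e2, e3, e4, e5, e6]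
    have p1 : (1:ℕ) ≤ 2 ^ (j + 5) := Nat.one_le_two_pow
    have p2 : (1:ℕ) ≤ 2 ^ (j + 2) := Nat.one_le_two_pow
    have p3 : (1:ℕ) ≤ 2 ^ (2 * j + 7) + 2 ^ (j + 5) :=
      le_trans Nat.one_le_two_pow (Nat.le_add_right _ _)
    zify [p1, p2, p3]
    rw [show 2 * j + 7 = j + (j + 7) from by omega]
    rw [pow_add, pow_add, pow_add, pow_add, pow_add, pow_add, pow_add]
    ring
  have hpk : 2 ^ k = 2 * 2 ^ (k - 1) := by
    rw [← pow_succ']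
    congr 1
    omega
  have hBsq : B ((2 ^ (2 * k + 1) + 2 ^ (k + 2) - 1) ^ 2) = k + 3 := by
    rw [hsq,
      Bsplit (k + 3) ((2 ^ (k - 1) - 1) + 2 ^ k * (1 + 2 ^ (k + 1) * (1 + 2 ^ (k - 2)))) 1
        (Nat.one_lt_two_pow (by omega)), Bone]
    rw [show (2 ^ (k - 1) - 1) + 2 ^ k * (1 + 2 ^ (k + 1) * (1 + 2 ^ (k - 2)))
        = 2 ^ k * (1 + 2 ^ (k + 1) * (1 + 2 ^ (k - 2))) + (2 ^ (k - 1) - 1) from Nat.add_comm _ _]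
    rw [Bsplit k (1 + 2 ^ (k + 1) * (1 + 2 ^ (k - 2))) (2 ^ (k - 1) - 1) (by omega),
      Bpow2m1]
    rw [show (1:ℕ) + 2 ^ (k + 1) * (1 + 2 ^ (k - 2))
        = 2 ^ (k + 1) * (1 + 2 ^ (k - 2)) + 1 from Nat.add_comm _ _]
    rw [Bsplit (k + 1) (1 + 2 ^ (k - 2)) 1 (Nat.one_lt_two_pow (by omega)), Bone]
    rw [show (1:ℕ) + 2 ^ (k - 2) = 2 ^ (k - 2) * 1 + 1 from by ring]
    rw [Bsplit (k - 2) 1 1 (Nat.one_lt_two_pow (by omega)), Bone]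
    omega
  refine ⟨by rw [hBn, hBsq], ?_, ?_⟩
  · have : (2:ℕ) ≤ 2 ^ (k + 2) := by
      calc (2:ℕ) = 2 ^ 1 := rfl
      _ ≤ 2 ^ (k + 2) := Nat.pow_le_pow_right (by norm_num) (by omega)
    omega
  · have hge : (1:ℕ) ≤ 2 ^ (2 * k + 1) + 2 ^ (k + 2) := le_trans h1 (Nat.le_add_left _ _)
    rw [Nat.cast_sub hge]
    push_cast
    have hk2 : (2:ℝ) ^ (k : ℕ) < 2 ^ ((2 * (k:ℝ) + 1) / 2) := by
      rw [← Real.rpow_natCast 2 k]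
      refine (Real.rpow_lt_rpow_left_iff (by norm_num : (1:ℝ) < 2)).mpr ?_
      have : (0:ℝ) ≤ (k:ℝ) := Nat.cast_nonneg k
      linarith
    have hp2 : (2:ℝ) ^ (k + 2) = 4 * 2 ^ k := by ring
    linarith
end

section
/- Let n and m be odd positive integers with binary expansions of lengths k and h respectively. If ν ≥ max(2h - 1, h + k + 1), then B((n·2^ν - m)^2) = B(n^2) + B(m^2) - B(m·n) + ν - 1. -/
lemma Bbit (x r : ℕ) (hr : r < 2) : B (2 * x + r) = B x + r := by
  rcases Nat.eq_zero_or_pos x with hx | hx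
  · subst hx; interval_cases r <;> simp [B]
  · have h2 : 0 < 2 * x + r := by omega
    have hm : (2 * x + r) % 2 = r := by omega
    have hd : (2 * x + r) / 2 = x := by omega
    unfold B
    rw [Nat.digits_def' (by norm_num : 1 < 2) h2, hm, hd]
    simp [Nat.add_comm]

lemma Badd (b : ℕ) : ∀ t a, a < 2 ^ t → B (a + b * 2 ^ t) = B a + B b := by
  intro t
  induction t with
  | zero =>
    intro a ha
    interval_cases a
    simp [B]
  | succ t ih =>
    intro a ha
    have hps : (2:ℕ) ^ (t + 1) = 2 ^ t * 2 := pow_succ 2 t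
    have he : a + b * 2 ^ (t + 1) = 2 * (a / 2 + b * 2 ^ t) + a % 2 := by
      rw [hps]
      have hb : b * (2 ^ t * 2) = 2 * (b * 2 ^ t) := by ring
      omega
    have ha2 : a = 2 * (a / 2) + a % 2 := by omega
    rw [he, Bbit _ _ (by omega), ih (a / 2) (by rw [hps] at ha; omega)]
    conv_rhs => rw [ha2, Bbit _ _ (by omega)]
    ring

lemma Bcompl : ∀ s x, x < 2 ^ s → B x + B (2 ^ s - 1 - x) = s := by
  intro s
  induction s with
  | zero =>
    intro x hx
    interval_cases x
    simp [B]
  | succ s ih =>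
    intro x hx
    have hps : (2:ℕ) ^ (s + 1) = 2 ^ s * 2 := pow_succ 2 s
    have hpos : 1 ≤ (2:ℕ) ^ s := Nat.one_le_two_pow
    have h2 : 2 ^ (s + 1) - 1 - x = 2 * (2 ^ s - 1 - x / 2) + (1 - x % 2) := by
      rw [hps] at hx ⊢; omega
    have h1 : x = 2 * (x / 2) + x % 2 := by omega
    rw [h2, Bbit _ _ (by omega)]
    nth_rewrite 1 [h1]
    rw [Bbit _ _ (by omega)]
    have := ih (x / 2) (by rw [hps] at hx; omega)
    omega

theorem stmt_9 (n m k h ν : ℕ) (hodd : Odd n) (hodd' : Odd m)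
    (hk1 : 2 ^ (k - 1) ≤ n) (hk2 : n < 2 ^ k)
    (hh1 : 2 ^ (h - 1) ≤ m) (hh2 : m < 2 ^ h)
    (hν : max (2 * h - 1) (h + k + 1) ≤ ν) :
    (B ((n * 2 ^ ν - m) ^ 2) : ℤ) = (B (n ^ 2) : ℤ) + B (m ^ 2) - B (m * n) + ν - 1 := by
  have hn1 : 1 ≤ n := hodd.pos
  have hm1 : 1 ≤ m := hodd'.pos
  have hh0 : 1 ≤ h := by
    rcases Nat.eq_zero_or_pos h with h0 | h0
    · subst h0; simp at hh2; omega
    · exact h0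
  have hk0 : 1 ≤ k := by
    rcases Nat.eq_zero_or_pos k with h0 | h0
    · subst h0; simp at hk2; omega
    · exact h0
  have hν1 : h + k + 1 ≤ ν := le_trans (le_max_right _ _) hν
  have hν2 : 2 * h - 1 ≤ ν := le_trans (le_max_left _ _) hν
  obtain ⟨ν', rfl⟩ : ∃ ν', ν = ν' + 1 := ⟨ν - 1, by omega⟩
  have hνk : h + k ≤ ν' := by omega
  have hνh : 2 * h ≤ ν' + 2 := by omega
  -- basic bounds
  have hmn : m * n < 2 ^ (h + k) := by
    calc m * n < 2 ^ h * 2 ^ k := Nat.mul_lt_mul_of_lt_of_le hh2 (le_of_lt hk2) (by positivity)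
    _ = 2 ^ (h + k) := (pow_add 2 h k).symm
  have hmnν : m * n ≤ 2 ^ ν' := le_trans hmn.le (Nat.pow_le_pow_right (by norm_num) hνk)
  have hmn1 : 1 ≤ m * n := Nat.mul_pos hm1 hn1
  have hm2 : m ^ 2 < 2 ^ (ν' + 2) := by
    calc m ^ 2 = m * m := sq m
    _ < 2 ^ h * 2 ^ h := Nat.mul_lt_mul_of_lt_of_le hh2 hh2.le (by positivity)
    _ = 2 ^ (2 * h) := by rw [← pow_add]; ring_nf
    _ ≤ 2 ^ (ν' + 2) := Nat.pow_le_pow_right (by norm_num) hνh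
  have hle1 : m ≤ n * 2 ^ (ν' + 1) := by
    calc m ≤ 2 ^ h := hh2.le
    _ ≤ 2 ^ (ν' + 1) := Nat.pow_le_pow_right (by norm_num) (by omega)
    _ ≤ n * 2 ^ (ν' + 1) := Nat.le_mul_of_pos_left _ hn1
  have hle2 : m * n ≤ n ^ 2 * 2 ^ ν' := by
    calc m * n ≤ 2 ^ ν' := hmnν
    _ ≤ n ^ 2 * 2 ^ ν' := Nat.le_mul_of_pos_left _ (pow_pos hn1 2)
  -- decomposition
  have E1 : (n * 2 ^ (ν' + 1) - m) ^ 2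
      = m ^ 2 + (n ^ 2 * 2 ^ ν' - m * n) * 2 ^ (ν' + 2) := by
    zify [hle1, hle2]
    ring
  have E2 : n ^ 2 * 2 ^ ν' - m * n = (2 ^ ν' - m * n) + (n ^ 2 - 1) * 2 ^ ν' := by
    have hn2 : 1 ≤ n ^ 2 := Nat.one_le_pow _ _ hn1
    zify [hmnν, hn2, hle2]
    ring
  have e1 : B ((n * 2 ^ (ν' + 1) - m) ^ 2)
      = B (m ^ 2) + B (n ^ 2 * 2 ^ ν' - m * n) := by
    rw [E1, Badd _ _ _ hm2]
  have e2 : B (n ^ 2 * 2 ^ ν' - m * n)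
      = B (2 ^ ν' - m * n) + B (n ^ 2 - 1) := by
    rw [E2, Badd _ _ _ (by omega)]
  have e3 : B (m * n - 1) + B (2 ^ ν' - m * n) = ν' := by
    have := Bcompl ν' (m * n - 1) (by omega)
    have hx : 2 ^ ν' - 1 - (m * n - 1) = 2 ^ ν' - m * n := by omega
    rwa [hx] at this
  -- odd facts
  obtain ⟨q, hq0⟩ := hodd.pow (n := 2)
  obtain ⟨p, hp0⟩ := hodd'.mul hodd
  have hq : n ^ 2 = 2 * q + 1 := by omega
  have hp : m * n = 2 * p + 1 := by omega
  have e4 : B (n ^ 2) = B (n ^ 2 - 1) + 1 := by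
    rw [hq, show 2 * q + 1 - 1 = 2 * q + 0 from by omega,
      Bbit q 1 (by omega), Bbit q 0 (by omega)]
  have e5 : B (m * n) = B (m * n - 1) + 1 := by
    rw [hp, show 2 * p + 1 - 1 = 2 * p + 0 from by omega,
      Bbit p 1 (by omega), Bbit p 0 (by omega)]
  omega
end
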